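/- Define T : [0,1] × [0,1] → ℝ by T(x,y) = (x+y)/16 for (x,y) ≠ (1,1) and T(1,1) = 1/18. Then T is not continuous at (1,1), yet T is a Kannan type equicontraction mapping with constant k = 1/7: for all x₁, x₂, y ∈ [0,1], |T(x₁,y) − T(x₂,y)| ≤ (1/7)·(|T(x₁,y) − x₁| + |T(x₂,y) − x₂|). -/

import Mathlib

/-- The map `T(x,y) = (x+y)/16` for `(x,y) ≠ (1,1)`, `T(1,1) = 1/18`, is not continuous
at `(1,1)` (with respect to the subspace topology of `[0,1] × [0,1]`), yet it is a
Kannan type equicontraction on `[0,1] × [0,1]` with constant `k = 1/7`. -/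
theorem example_discontinuous_kannan_equicontraction
    (T : ℝ → ℝ → ℝ)
    (hT : ∀ x y : ℝ, T x y = if (x, y) = ((1 : ℝ), (1 : ℝ)) then 1 / 18 else (x + y) / 16) :
    ¬ ContinuousWithinAt (fun p : ℝ × ℝ => T p.1 p.2)
        (Set.Icc (0 : ℝ) 1 ×ˢ Set.Icc (0 : ℝ) 1) (1, 1) ∧
    ∀ x₁ ∈ Set.Icc (0 : ℝ) 1, ∀ x₂ ∈ Set.Icc (0 : ℝ) 1, ∀ y ∈ Set.Icc (0 : ℝ) 1,
      |T x₁ y - T x₂ y| ≤ 1 / 7 * (|T x₁ y - x₁| + |T x₂ y - x₂|) := by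
  constructor
  · intro hc
    have hval : T 1 1 = 1 / 18 := by rw [hT]; simp
    have hseq : Filter.Tendsto (fun n : ℕ => ((1 - 1/(n+1) : ℝ), (1 : ℝ)))
        Filter.atTop (nhdsWithin (1, 1) (Set.Icc (0 : ℝ) 1 ×ˢ Set.Icc (0 : ℝ) 1)) := by
      rw [tendsto_nhdsWithin_iff]
      constructor
      · have h1 : Filter.Tendsto (fun n : ℕ => (1 - 1/(n+1) : ℝ)) Filter.atTop (nhds 1) := by
          have := tendsto_one_div_add_atTop_nhds_zero_nat (𝕜 := ℝ)
          have := Filter.Tendsto.const_sub (1 : ℝ) this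
          simpa using this
        exact h1.prodMk_nhds tendsto_const_nhds
      · filter_upwards with n
        constructor
        · constructor
          · simp only [sub_nonneg]
            have : (0:ℝ) < (n:ℝ)+1 := by positivity
            rw [div_le_one this]; linarith
          · have : (0:ℝ) < 1/((n:ℝ)+1) := by positivity
            linarith
        · exact ⟨by norm_num, by norm_num⟩
    have hlim := (hc.tendsto.comp hseq)
    have hlim2 : Filter.Tendsto (fun n : ℕ => ((1 - 1/(n+1) : ℝ) + 1) / 16)
        Filter.atTop (nhds (1/18 : ℝ)) := by
      have : ∀ n : ℕ, (fun p : ℝ × ℝ => T p.1 p.2) ((1 - 1/(n+1) : ℝ), (1 : ℝ))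
          = ((1 - 1/(n+1) : ℝ) + 1) / 16 := by
        intro n
        have hne : ((1 - 1/((n:ℝ)+1) : ℝ), (1 : ℝ)) ≠ ((1:ℝ), (1:ℝ)) := by
          intro h
          have h1 := congrArg Prod.fst h
          simp at h1
          have : (0:ℝ) < 1/((n:ℝ)+1) := by positivity
          linarith [h1]
        simp only [hT]
        rw [if_neg hne]
      rw [hval] at hlim
      exact (Filter.tendsto_congr this).mp hlim
    have hlim3 : Filter.Tendsto (fun n : ℕ => ((1 - 1/(n+1) : ℝ) + 1) / 16)
        Filter.atTop (nhds (1/8 : ℝ)) := by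
      have h1 : Filter.Tendsto (fun n : ℕ => (1 - 1/(n+1) : ℝ)) Filter.atTop (nhds 1) := by
        have := tendsto_one_div_add_atTop_nhds_zero_nat (𝕜 := ℝ)
        have := Filter.Tendsto.const_sub (1 : ℝ) this
        simpa using this
      have := (h1.add_const 1).div_const 16
      norm_num at this
      convert this using 2
      norm_num
    have := tendsto_nhds_unique hlim2 hlim3
    norm_num at this
  · rintro x₁ ⟨h1a, h1b⟩ x₂ ⟨h2a, h2b⟩ y ⟨hya, hyb⟩
    rw [hT, hT]
    by_cases e1 : (x₁, y) = ((1:ℝ), (1:ℝ)) <;> by_cases e2 : (x₂, y) = ((1:ℝ), (1:ℝ))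
    · rw [if_pos e1, if_pos e2]
      obtain ⟨q1, q2⟩ := Prod.mk.injEq .. ▸ e1
      obtain ⟨q3, _⟩ := Prod.mk.injEq .. ▸ e2
      subst q1; subst q3
      norm_num
    · rw [if_pos e1, if_neg e2]
      obtain ⟨q1, q2⟩ := Prod.mk.injEq .. ▸ e1
      subst q1; subst q2
      rcases abs_cases (1/18 - (x₂ + 1)/16) with ⟨h, _⟩ | ⟨h, _⟩ <;>
      rcases abs_cases ((1/18 : ℝ) - 1) with ⟨g, _⟩ | ⟨g, _⟩ <;>
      rcases abs_cases ((x₂ + 1)/16 - x₂) with ⟨f, _⟩ | ⟨f, _⟩ <;>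
      linarith
    · rw [if_neg e1, if_pos e2]
      obtain ⟨q1, q2⟩ := Prod.mk.injEq .. ▸ e2
      subst q1; subst q2
      rcases abs_cases ((x₁ + 1)/16 - 1/18) with ⟨h, _⟩ | ⟨h, _⟩ <;>
      rcases abs_cases ((1/18 : ℝ) - 1) with ⟨g, _⟩ | ⟨g, _⟩ <;>
      rcases abs_cases ((x₁ + 1)/16 - x₁) with ⟨f, _⟩ | ⟨f, _⟩ <;>
      linarith
    · rw [if_neg e1, if_neg e2]
      rcases abs_cases ((x₁ + y)/16 - (x₂ + y)/16) with ⟨h, _⟩ | ⟨h, _⟩ <;>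
      rcases abs_cases ((x₁ + y)/16 - x₁) with ⟨g, _⟩ | ⟨g, _⟩ <;>
      rcases abs_cases ((x₂ + y)/16 - x₂) with ⟨f, _⟩ | ⟨f, _⟩ <;>
      linarith
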